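/- arXiv:math/0609145 — 2 statements merged into one kernel-verified Lean document; each statement's English description precedes it below -/
import Mathlib

section
/- Let h : [0,L] → ℝ be r times continuously differentiable with h^(r) ≥ κ/2 > 0 on [0,L], with σⱼ·h^(j)(0) ≥ −η and σⱼ·h^(j)(L) ≥ −η for some signs σⱼ (j = 1,…,r−1), and suppose |h(0)| ≤ 2ħ and |h(L)| ≤ 2ħ where η = ħ^(1−1/r). Then L ≤ C·ħ^(1/r), where C depends only on r and κ. -/
/-!
Write `fⱼ` for the `j`-th derivative of `h` on `[0, L]`. Starting from `c ≤ f_r` with `c = κ / 2`,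
integrate `r - 1` times: at each step, if the current sign of `fⱼ₊₁` agrees with `σⱼ`, integrate
from `0`, otherwise from `L`; in both cases the boundary condition `-η ≤ σⱼ fⱼ` at that endpoint
shows that `σⱼ fⱼ` is at least `c d^(r-j) / (r-j)! - Eⱼ`, where `d` is the distance to that endpoint
and `Eⱼ` collects the boundary errors. A last integration gives
`c L^r / r! - E L ≤ |h L - h 0| ≤ 4ħ`. With `L = x ħ^(1/r)` and `η = ħ^(1 - 1/r)`, every error
term is at most `ħ` times a power of `x` below `x^r` (this uses `ħ ≤ 1`), so `x` is bounded in
terms of `r` and `κ`.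
-/

open Set
open scoped Nat

theorem ContDiffOn.hasDerivWithinAt_iteratedDerivWithin {𝕜 F : Type*}
    [NontriviallyNormedField 𝕜] [NormedAddCommGroup F] [NormedSpace 𝕜 F]
    {n j : ℕ} {f : 𝕜 → F} {s : Set 𝕜} {x : 𝕜}
    (hf : ContDiffOn 𝕜 n f s) (hs : UniqueDiffOn 𝕜 s) (hj : j < n) (hx : x ∈ s) :
    HasDerivWithinAt (iteratedDerivWithin j f s) (iteratedDerivWithin (j + 1) f s x) s x := by
  rw [iteratedDerivWithin_succ]
  exact (hf.differentiableOn_iteratedDerivWithin (mod_cast hj) hs x hx).hasDerivWithinAt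

theorem hasDerivAt_mul_pow_succ_div_factorial (c : ℝ) (k : ℕ) (x : ℝ) :
    HasDerivAt (fun t ↦ c * t ^ (k + 1) / (k + 1)!) (c * x ^ k / k !) x := by
  refine (((hasDerivAt_pow (k + 1) x).const_mul c).div_const ((k + 1)! : ℝ)).congr_deriv ?_
  push_cast [Nat.factorial_succ, Nat.add_sub_cancel]
  field_simp

section EndpointPowerLowerBound

variable {L c E : ℝ} {k : ℕ}

def EndpointPowerLowerBound (L c E : ℝ) (k : ℕ) (u : ℝ → ℝ) : Prop :=
  (∀ t ∈ Icc 0 L, c * t ^ k / (k ! : ℝ) - E ≤ u t) ∨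
    ∀ t ∈ Icc 0 L, c * (L - t) ^ k / (k ! : ℝ) - E ≤ u t

theorem antideriv_bounds_of_mul_pow_le_deriv {g g' : ℝ → ℝ} (hc : 0 ≤ c) (hE : 0 ≤ E)
    (hg : ∀ t ∈ Icc 0 L, HasDerivWithinAt g (g' t) (Icc 0 L) t)
    (hg' : ∀ t ∈ Icc 0 L, c * t ^ k / (k ! : ℝ) - E ≤ g' t) {t : ℝ} (ht : t ∈ Icc 0 L) :
    c * t ^ (k + 1) / ((k + 1)! : ℝ) - E * L ≤ g t - g 0 ∧
      c * (L - t) ^ (k + 1) / ((k + 1)! : ℝ) - E * L ≤ g L - g t := by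
  set q : ℝ → ℝ := fun s ↦ c * s ^ (k + 1) / ((k + 1)! : ℝ) - E * s
  have hq (s : ℝ) : HasDerivAt q (c * s ^ k / (k ! : ℝ) - E) s := by
    simpa using
      (hasDerivAt_mul_pow_succ_div_factorial c k s).fun_sub ((hasDerivAt_id s).const_mul E)
  have hmono : MonotoneOn (fun s ↦ g s - q s) (Icc 0 L) := by
    refine monotoneOn_of_hasDerivWithinAt_nonneg (convex_Icc 0 L)
      (fun s hs ↦ ((hg s hs).sub (hq s).hasDerivWithinAt).continuousWithinAt)
      (fun s hs ↦ ((hg s (interior_subset hs)).sub (hq s).hasDerivWithinAt).mono interior_subset)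
      fun s hs ↦ sub_nonneg.2 (hg' s (interior_subset hs))
  have hL : 0 ≤ L := ht.1.trans ht.2
  have hleft := hmono ⟨le_rfl, hL⟩ ht ht.1
  have hright := hmono ht ⟨hL, le_rfl⟩ ht.2
  have hEt : E * t ≤ E * L := mul_le_mul_of_nonneg_left ht.2 hE
  have hsuper : c * t ^ (k + 1) / (k + 1)! + c * (L - t) ^ (k + 1) / (k + 1)! ≤
      c * L ^ (k + 1) / (k + 1)! := by
    rw [← add_div, ← mul_add]
    gcongr
    simpa using pow_add_pow_le ht.1 (sub_nonneg.2 ht.2) k.succ_ne_zero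
  simp only [q, zero_pow k.succ_ne_zero, mul_zero, zero_div, sub_zero] at hleft hright
  constructor
  · linarith
  · linarith [mul_nonneg hE ht.1]

theorem EndpointPowerLowerBound.antideriv_bounds {g g' : ℝ → ℝ} (hc : 0 ≤ c) (hE : 0 ≤ E)
    (hg : ∀ t ∈ Icc 0 L, HasDerivWithinAt g (g' t) (Icc 0 L) t)
    (hg' : EndpointPowerLowerBound L c E k g') {t : ℝ} (ht : t ∈ Icc 0 L) :
    c * t ^ (k + 1) / ((k + 1)! : ℝ) - E * L ≤ g t - g 0 ∧
      c * (L - t) ^ (k + 1) / ((k + 1)! : ℝ) - E * L ≤ g L - g t := by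
  rcases hg' with hleft | hright
  · exact antideriv_bounds_of_mul_pow_le_deriv hc hE hg hleft ht
  · have hmaps : MapsTo (fun s ↦ L - s) (Icc 0 L) (Icc 0 L) := fun s hs ↦
      ⟨sub_nonneg.2 hs.2, sub_le_self L hs.1⟩
    have hreflect (s : ℝ) (hs : s ∈ Icc 0 L) :
        HasDerivWithinAt (fun s ↦ -g (L - s)) (g' (L - s)) (Icc 0 L) s :=
      ((hg _ (hmaps hs)).scomp s ((hasDerivWithinAt_id s _).const_sub L) hmaps).neg.congr_deriv
        (by simp)
    have := antideriv_bounds_of_mul_pow_le_deriv hc hE hreflect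
      (fun s hs ↦ by simpa using hright _ (hmaps hs)) (hmaps ht)
    simp only [sub_zero, sub_self, sub_sub_cancel, sub_neg_eq_add] at this
    constructor
    · linarith [this.2]
    · linarith [this.1]

theorem EndpointPowerLowerBound.succ {g g' : ℝ → ℝ} {η ε σ : ℝ} (hc : 0 ≤ c) (hE : 0 ≤ E)
    (hg : ∀ t ∈ Icc 0 L, HasDerivWithinAt g (g' t) (Icc 0 L) t)
    (hg' : EndpointPowerLowerBound L c E k fun t ↦ ε * g' t) (hεσ : ε = σ ∨ ε = -σ)
    (h0 : -η ≤ σ * g 0) (hL : -η ≤ σ * g L) :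
    EndpointPowerLowerBound L c (η + E * L) (k + 1) fun t ↦ σ * g t := by
  have hbounds (t : ℝ) (ht : t ∈ Icc 0 L) :=
    hg'.antideriv_bounds hc hE (fun s hs ↦ (hg s hs).const_mul ε) ht
  rcases hεσ with rfl | rfl
  · exact Or.inl fun t ht ↦ by linarith [(hbounds t ht).1]
  · refine Or.inr fun t ht ↦ ?_
    linarith [(hbounds t ht).2]

end EndpointPowerLowerBound

/-- The error after `k` integrations over an interval of length `L`, with boundary errors `η`. -/
def accumulatedError (η L : ℝ) : ℕ → ℝ
  | 0 => 0
  | k + 1 => η + accumulatedError η L k * L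

theorem accumulatedError_nonneg {η L : ℝ} (hη : 0 ≤ η) (hL : 0 ≤ L) :
    ∀ k, 0 ≤ accumulatedError η L k
  | 0 => le_rfl
  | k + 1 => add_nonneg hη (mul_nonneg (accumulatedError_nonneg hη hL k) hL)

theorem accumulatedError_mul_le {b x : ℝ} {m : ℕ} (hb0 : 0 ≤ b) (hb1 : b ≤ 1) (hx : 1 ≤ x) :
    ∀ k, accumulatedError (b ^ m) (x * b) k * (x * b) ≤ k * b ^ (m + 1) * x ^ k
  | 0 => by simp [accumulatedError]
  | k + 1 => by
    have ih := accumulatedError_mul_le (m := m) hb0 hb1 hx k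
    have hxk : x ≤ x ^ (k + 1) := le_self_pow₀ hx k.succ_ne_zero
    have hbm : b ^ (m + 2) ≤ b ^ (m + 1) := pow_le_pow_of_le_one hb0 hb1 (by omega)
    calc accumulatedError (b ^ m) (x * b) (k + 1) * (x * b)
        = b ^ (m + 1) * x + accumulatedError (b ^ m) (x * b) k * (x * b) * (x * b) := by
          simp only [accumulatedError]; ring
      _ ≤ b ^ (m + 1) * x ^ (k + 1) + k * b ^ (m + 1) * x ^ k * (x * b) := by
          gcongr
      _ = b ^ (m + 1) * x ^ (k + 1) + k * b ^ (m + 2) * x ^ (k + 1) := by ring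
      _ ≤ b ^ (m + 1) * x ^ (k + 1) + k * b ^ (m + 1) * x ^ (k + 1) := by gcongr
      _ = (k + 1 : ℕ) * b ^ (m + 1) * x ^ (k + 1) := by push_cast; ring

theorem exists_sign_endpointPowerLowerBound_iteratedDerivWithin {r : ℕ} {L c η : ℝ}
    {h : ℝ → ℝ} {σ : ℕ → ℝ} (hL : 0 < L) (hc : 0 ≤ c) (hη : 0 ≤ η)
    (hσ : ∀ j, σ j = 1 ∨ σ j = -1) (hh : ContDiffOn ℝ r h (Icc 0 L))
    (htop : ∀ t ∈ Icc 0 L, c ≤ iteratedDerivWithin r h (Icc 0 L) t)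
    (hbd : ∀ j, 1 ≤ j → j ≤ r - 1 →
      -η ≤ σ j * iteratedDerivWithin j h (Icc 0 L) 0 ∧
      -η ≤ σ j * iteratedDerivWithin j h (Icc 0 L) L) :
    ∀ k < r, ∃ ε, (ε = 1 ∨ ε = -1) ∧ EndpointPowerLowerBound L c (accumulatedError η L k) k
      fun t ↦ ε * iteratedDerivWithin (r - k) h (Icc 0 L) t := by
  intro k hk
  induction k with
  | zero => exact ⟨1, Or.inl rfl, Or.inl fun t ht ↦ by simpa [accumulatedError] using htop t ht⟩
  | succ k ih =>
    obtain ⟨ε, hε, hbound⟩ := ih (by omega)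
    obtain ⟨h0, hL'⟩ := hbd (r - (k + 1)) (by omega) (by omega)
    have hderiv (t : ℝ) (ht : t ∈ Icc 0 L) := hh.hasDerivWithinAt_iteratedDerivWithin
      (uniqueDiffOn_Icc hL) (show r - (k + 1) < r by omega) ht
    rw [show r - (k + 1) + 1 = r - k by omega] at hderiv
    have hεσ : ε = σ (r - (k + 1)) ∨ ε = -σ (r - (k + 1)) := by
      rcases hε with rfl | rfl <;> rcases hσ (r - (k + 1)) with hs | hs <;> rw [hs] <;> norm_num
    exact ⟨_, hσ _, hbound.succ hc (accumulatedError_nonneg hη hL.le k) hderiv hεσ h0 hL'⟩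

theorem le_of_mul_pow_succ_div_factorial_le {A c x : ℝ} {m : ℕ} (hA : 0 ≤ A) (hc : 0 < c)
    (hx : 1 ≤ x) (h : c * x ^ (m + 1) / (m + 1)! ≤ A + m * x ^ m) :
    x ≤ (m + A) * (m + 1)! / c := by
  have hxm : 1 ≤ x ^ m := one_le_pow₀ hx
  have hfac : (0 : ℝ) < (m + 1)! := by positivity
  rw [le_div_iff₀ hc, ← mul_le_mul_iff_left₀ (zero_lt_one.trans_le hxm)]
  rw [div_le_iff₀ hfac, pow_succ] at h
  calc x * c * x ^ m = c * (x ^ m * x) := by ring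
    _ ≤ (A + m * x ^ m) * (m + 1)! := h
    _ ≤ (m + A) * x ^ m * (m + 1)! := by gcongr; nlinarith
    _ = (m + A) * (m + 1)! * x ^ m := by ring

theorem le_mul_of_mul_pow_succ_div_factorial_sub_le {A c b L : ℝ} {m : ℕ} (hA : 0 ≤ A)
    (hc : 0 < c) (hb0 : 0 < b) (hb1 : b ≤ 1) (hbL : b ≤ L)
    (h : c * L ^ (m + 1) / (m + 1)! - accumulatedError (b ^ m) L m * L ≤ A * b ^ (m + 1)) :
    L ≤ (m + A) * (m + 1)! / c * b := by
  obtain ⟨x, rfl⟩ : ∃ x, L = x * b := ⟨L / b, by field_simp⟩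
  have hx : 1 ≤ x := le_of_mul_le_mul_right (by simpa using hbL) hb0
  have herr := accumulatedError_mul_le (m := m) hb0.le hb1 hx m
  have hscaled : c * x ^ (m + 1) / (m + 1)! * b ^ (m + 1) ≤ (A + m * x ^ m) * b ^ (m + 1) := by
    calc c * x ^ (m + 1) / (m + 1)! * b ^ (m + 1) = c * (x * b) ^ (m + 1) / (m + 1)! := by ring
      _ ≤ A * b ^ (m + 1) + m * b ^ (m + 1) * x ^ m := by linarith
      _ = (A + m * x ^ m) * b ^ (m + 1) := by ring
  have := le_of_mul_pow_succ_div_factorial_le hA hc hx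
    (le_of_mul_le_mul_right hscaled (by positivity))
  gcongr

theorem segment_length_bound
    (r : ℕ) (hr : 1 ≤ r) (κ : ℝ) (hκ : 0 < κ) :
    ∃ C > 0, ∀ (L hbar : ℝ) (h : ℝ → ℝ) (σ : ℕ → ℝ),
      0 < L → 0 < hbar → hbar ≤ 1 →
      (∀ j, σ j = 1 ∨ σ j = -1) →
      ContDiffOn ℝ r h (Set.Icc 0 L) →
      (∀ t ∈ Set.Icc 0 L, κ / 2 ≤ iteratedDerivWithin r h (Set.Icc 0 L) t) →
      (∀ j, 1 ≤ j → j ≤ r - 1 →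
        -(hbar ^ (1 - 1 / (r : ℝ))) ≤ σ j * iteratedDerivWithin j h (Set.Icc 0 L) 0 ∧
        -(hbar ^ (1 - 1 / (r : ℝ))) ≤ σ j * iteratedDerivWithin j h (Set.Icc 0 L) L) →
      |h 0| ≤ 2 * hbar → |h L| ≤ 2 * hbar →
      L ≤ C * hbar ^ (1 / (r : ℝ)) := by
  obtain ⟨m, rfl⟩ : ∃ m, r = m + 1 := ⟨r - 1, by omega⟩
  refine ⟨max 1 ((m + 4) * (m + 1)! / (κ / 2)), by positivity, ?_⟩
  intro L hbar h σ hL hbar0 hbar1 hσ hh htop hbd h0 hL'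
  set b := hbar ^ (1 / ((m + 1 : ℕ) : ℝ))
  have hb0 : 0 < b := by positivity
  have hpow (n : ℕ) : b ^ n = hbar ^ (n / ((m + 1 : ℕ) : ℝ)) := by
    rw [← Real.rpow_natCast, ← Real.rpow_mul hbar0.le, one_div_mul_eq_div]
  have hη : hbar ^ (1 - 1 / ((m + 1 : ℕ) : ℝ)) = b ^ m := by
    rw [hpow]; congr 1; push_cast; field_simp; ring
  have hbr : b ^ (m + 1) = hbar := by
    rw [hpow]; push_cast; rw [div_self (by positivity), Real.rpow_one]
  rcases le_or_gt L b with hLb | hbL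
  · exact hLb.trans (le_mul_of_one_le_left hb0.le (le_max_left _ _))
  rw [hη] at hbd
  obtain ⟨ε, hε, hbound⟩ := exists_sign_endpointPowerLowerBound_iteratedDerivWithin hL
    (by positivity) (by positivity) hσ hh htop hbd m (by omega)
  rw [Nat.add_sub_cancel_left] at hbound
  have hderiv (t : ℝ) (ht : t ∈ Icc 0 L) :=
    (hh.hasDerivWithinAt_iteratedDerivWithin (uniqueDiffOn_Icc hL) m.succ_pos ht).const_mul ε
  rw [iteratedDerivWithin_zero] at hderiv
  have hgrowth := (hbound.antideriv_bounds (by positivity)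
    (accumulatedError_nonneg (by positivity) hL.le m) hderiv ⟨hL.le, le_rfl⟩).1
  have hosc : ε * h L - ε * h 0 ≤ 4 * b ^ (m + 1) := by
    rw [hbr]
    rcases hε with rfl | rfl <;> linarith [abs_le.1 h0, abs_le.1 hL']
  have := le_mul_of_mul_pow_succ_div_factorial_sub_le zero_le_four (half_pos hκ) hb0
    (Real.rpow_le_one hbar0.le hbar1 (by positivity)) hbL.le (hgrowth.trans hosc)
  exact this.trans (mul_le_mul_of_nonneg_right (le_max_right _ _) hb0.le)
end

section
/- Let h : ℝ → ℝ be r times continuously differentiable on an interval I with |h^(r)| ≥ κ > 0 on I, let ψ be a bounded measurable function supported in I with |ψ| ≤ M, and let β : ℝ → ℝ be measurable with support in [1/2, 2] and |β| ≤ 1. Then for every ħ > 0, ∫_I |ψ(t)·β(ħ^(−1) h(t))| dt ≤ 2^(r−1)·M·(2·r!/κ)^(1/r)·(2ħ)^(1/r). -/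
/-!
On the support of the integrand `ħ/2 ≤ h ≤ 2ħ`, so the integral is at most `M` times the measure
of the sublevel set `{t ∈ I | |h t| ≤ 2ħ}`.

A set of measure `> r d` contains points `s 0 < ⋯ < s r` with consecutive gaps `≥ d`. If they lie
in `{|h| ≤ ε}`, Rolle's theorem applied `r` times to `h` minus its Lagrange interpolant at these
nodes gives `κ ≤ |h⁽ʳ⁾(ξ)| = r! |h[s 0, …, s r]|`, and `|s j - s i| ≥ |j - i| d` bounds the divided
difference by `2 ^ r ε / (r! d ^ r)`. Hence `|{|h| ≤ ε}| ≤ 2 r (ε / κ) ^ (1 / r)`, and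
`2 r ≤ 2 ^ (r - 1) (2 r!) ^ (1 / r)`.
-/

open MeasureTheory Set Finset Polynomial
open scoped Nat

theorem Polynomial.iterate_derivative_of_natDegree_le {R : Type*} [CommSemiring R] {p : R[X]}
    {n : ℕ} (hp : p.natDegree ≤ n) : derivative^[n] p = C ((n ! : R) * p.coeff n) := by
  ext m
  rw [coeff_iterate_derivative, coeff_C]
  rcases m.eq_zero_or_pos with rfl | hm
  · simp [Nat.descFactorial_self, nsmul_eq_mul]
  · simp [hm.ne', coeff_eq_zero_of_natDegree_lt (by omega : p.natDegree < m + n)]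

theorem Polynomial.iteratedDeriv_eval {𝕜 : Type*} [NontriviallyNormedField 𝕜] (p : 𝕜[X]) (n : ℕ) :
    iteratedDeriv n (fun x => p.eval x) = fun x => (derivative^[n] p).eval x := by
  induction n with
  | zero => rfl
  | succ n ih =>
    ext x
    rw [iteratedDeriv_succ, ih, Function.iterate_succ_apply', Polynomial.deriv]

theorem Lagrange.coeff_interpolate_card_sub_one {F ι : Type*} [Field F] [DecidableEq ι]
    {s : Finset ι} {v : ι → F} (hvs : Set.InjOn v s) (y : ι → F) :
    (Lagrange.interpolate s v y).coeff (#s - 1) =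
      ∑ i ∈ s, y i / ∏ j ∈ s.erase i, (v i - v j) := by
  rw [Lagrange.interpolate_apply, finsetSum_coeff]
  refine Finset.sum_congr rfl fun i hi => ?_
  rw [coeff_C_mul, ← Lagrange.natDegree_basis hvs hi, coeff_natDegree,
    Lagrange.leadingCoeff_basis hvs hi, div_eq_mul_inv]

theorem Set.OrdConnected.uniqueDiffOn {S : Set ℝ} (hS : S.OrdConnected) {a b : ℝ} (hab : a < b)
    (ha : a ∈ S) (hb : b ∈ S) : UniqueDiffOn ℝ S :=
  uniqueDiffOn_convex hS.convex ⟨(a + b) / 2, interior_mono (hS.out ha hb)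
    (by rw [interior_Icc]; constructor <;> linarith)⟩

theorem exists_iteratedDerivWithin_eq_zero {S : Set ℝ} (hS : S.OrdConnected) (k : ℕ) {g : ℝ → ℝ}
    (hg : ContDiffOn ℝ k g S) {x : ℕ → ℝ} (hx : StrictMono x) (hxS : ∀ i ≤ k, x i ∈ S)
    (hgx : ∀ i ≤ k, g (x i) = 0) :
    ∃ ξ ∈ Icc (x 0) (x k), iteratedDerivWithin k g S ξ = 0 := by
  induction k generalizing g x with
  | zero => exact ⟨x 0, left_mem_Icc.2 le_rfl, by simpa using hgx 0 le_rfl⟩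
  | succ k ih =>
    have hrolle : ∀ i, ∃ y ∈ Ioo (x i) (x (i + 1)), i ≤ k → derivWithin g S y = 0 := by
      intro i
      by_cases hi : i ≤ k
      · have hsub : Icc (x i) (x (i + 1)) ⊆ S := hS.out (hxS i (by omega)) (hxS (i + 1) (by omega))
        obtain ⟨y, hy, hgy⟩ := exists_deriv_eq_zero (hx (Nat.lt_succ_self i))
          (hg.continuousOn.mono hsub) (by rw [hgx i (by omega), hgx (i + 1) (by omega)])
        refine ⟨y, hy, fun _ => ?_⟩
        rwa [derivWithin_of_mem_nhds (Filter.mem_of_superset (Ioo_mem_nhds hy.1 hy.2)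
          (Ioo_subset_Icc_self.trans hsub))]
      · obtain ⟨y, hy⟩ := Set.nonempty_Ioo.2 (hx (Nat.lt_succ_self i))
        exact ⟨y, hy, fun h => absurd h hi⟩
    choose y hy hgy using hrolle
    have hy_mono : StrictMono y := strictMono_nat_of_lt_succ fun i => (hy i).2.trans (hy (i + 1)).1
    have hg' : ContDiffOn ℝ k (derivWithin g S) S :=
      hg.derivWithin (hS.uniqueDiffOn (hx zero_lt_one) (hxS 0 (by omega)) (hxS 1 (by omega)))
        le_rfl
    have hyS : ∀ i ≤ k, y i ∈ S := fun i hi =>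
      hS.out (hxS i (by omega)) (hxS (i + 1) (by omega)) (Ioo_subset_Icc_self (hy i))
    obtain ⟨ξ, hξ, hξ0⟩ := ih hg' hy_mono hyS hgy
    refine ⟨ξ, ⟨(hy 0).1.le.trans hξ.1, hξ.2.trans (hy k).2.le⟩, ?_⟩
    rwa [iteratedDerivWithin_succ']

/-- The divided difference `g[x 0, …, x r]`, in Lagrange's form. -/
noncomputable def divDiff (g : ℝ → ℝ) (x : ℕ → ℝ) (r : ℕ) : ℝ :=
  ∑ j ∈ range (r + 1), g (x j) / ∏ i ∈ (range (r + 1)).erase j, (x j - x i)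

theorem exists_iteratedDerivWithin_eq_factorial_mul_divDiff {S : Set ℝ} (hS : S.OrdConnected)
    (r : ℕ) {g : ℝ → ℝ} (hg : ContDiffOn ℝ r g S) {x : ℕ → ℝ} (hx : StrictMono x)
    (hxS : ∀ i ≤ r, x i ∈ S) :
    ∃ ξ ∈ Icc (x 0) (x r), iteratedDerivWithin r g S ξ = r ! * divDiff g x r := by
  rcases r.eq_zero_or_pos with rfl | hr
  · exact ⟨x 0, left_mem_Icc.2 le_rfl, by simp [divDiff]⟩
  set P := Lagrange.interpolate (range (r + 1)) x (fun i => g (x i))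
  have hinj : Set.InjOn x (Finset.range (r + 1)) := hx.injective.injOn
  have hP_deg : P.natDegree ≤ r := by
    have := Lagrange.degree_interpolate_lt (fun i => g (x i)) hinj
    rw [card_range] at this
    exact natDegree_le_of_degree_le (Order.le_of_lt_succ (by exact_mod_cast this))
  have hP_coeff : P.coeff r = divDiff g x r := by
    have := Lagrange.coeff_interpolate_card_sub_one hinj (fun i => g (x i))
    rwa [card_range, Nat.add_sub_cancel] at this
  have hP_smooth : ContDiff ℝ r (fun t => P.eval t) := by
    simpa using P.contDiff_aeval (r : WithTop ℕ∞) (𝕜 := ℝ)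
  have hU : UniqueDiffOn ℝ S := hS.uniqueDiffOn (hx hr) (hxS 0 hr.le) (hxS r le_rfl)
  obtain ⟨ξ, hξ, hξ0⟩ := exists_iteratedDerivWithin_eq_zero hS r
    (g := g - fun t => P.eval t) (hg.sub hP_smooth.contDiffOn) hx hxS fun i hi => sub_eq_zero.2
      (Lagrange.eval_interpolate_at_node (fun i => g (x i)) hinj
        (mem_range.2 (Nat.lt_succ_of_le hi))).symm
  have hξS : ξ ∈ S := hS.out (hxS 0 hr.le) (hxS r le_rfl) hξ
  refine ⟨ξ, hξ, ?_⟩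
  rw [iteratedDerivWithin_sub hξS hU (hg ξ hξS) hP_smooth.contDiffWithinAt, sub_eq_zero] at hξ0
  rw [hξ0, iteratedDerivWithin_eq_iteratedDeriv hU hP_smooth.contDiffAt hξS, P.iteratedDeriv_eval,
    iterate_derivative_of_natDegree_le hP_deg, hP_coeff]
  exact eval_C

theorem prod_erase_range_abs_natCast_sub {r j : ℕ} (hj : j ≤ r) :
    ∏ i ∈ (range (r + 1)).erase j, |(j : ℝ) - i| = j ! * (r - j)! := by
  have hsplit : (range (r + 1)).erase j = range j ∪ Ico (j + 1) (r + 1) := by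
    ext i; simp only [Finset.mem_erase, Finset.mem_range, Finset.mem_union, Finset.mem_Ico]; omega
  rw [hsplit, prod_union (disjoint_left.2 fun i hi hi' => by simp at hi hi'; omega),
    prod_Ico_eq_prod_range, ← Nat.descFactorial_self, Nat.descFactorial_eq_prod_range,
    ← prod_range_add_one_eq_factorial, Nat.cast_prod, Nat.cast_prod,
    show r + 1 - (j + 1) = r - j by omega]
  congr 1 <;> refine prod_congr rfl fun i hi => ?_
  · rw [Finset.mem_range] at hi
    rw [Nat.cast_sub hi.le, abs_of_nonneg (by simpa using hi.le)]
  · push_cast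
    rw [abs_of_nonpos (by linarith)]
    ring

theorem natCast_sub_mul_le_sub {x : ℕ → ℝ} {d : ℝ} (hx : ∀ i, x i + d ≤ x (i + 1)) {i j : ℕ}
    (hij : i ≤ j) : ((j : ℝ) - i) * d ≤ x j - x i := by
  induction j, hij using Nat.le_induction with
  | base => simp
  | succ j _ ih => push_cast; linarith [hx j]

theorem abs_natCast_sub_mul_le_abs_sub {x : ℕ → ℝ} {d : ℝ} (hx : ∀ i, x i + d ≤ x (i + 1))
    (i j : ℕ) : |(j : ℝ) - i| * d ≤ |x j - x i| := by
  rcases le_total i j with hij | hji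
  · rw [abs_of_nonneg (by simpa using hij)]
    exact (natCast_sub_mul_le_sub hx hij).trans (le_abs_self _)
  · rw [abs_sub_comm, abs_sub_comm (x j), abs_of_nonneg (by simpa using hji)]
    exact (natCast_sub_mul_le_sub hx hji).trans (le_abs_self _)

theorem factorial_mul_pow_mul_abs_divDiff_le {g : ℝ → ℝ} {x : ℕ → ℝ} {d ε : ℝ} {r : ℕ}
    (hd : 0 ≤ d) (hx : ∀ i, x i + d ≤ x (i + 1)) (hg : ∀ i ≤ r, |g (x i)| ≤ ε) :
    r ! * d ^ r * |divDiff g x r| ≤ 2 ^ r * ε := by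
  have hε : 0 ≤ ε := (abs_nonneg _).trans (hg 0 (Nat.zero_le r))
  have hterm : ∀ j ∈ range (r + 1), r ! * d ^ r * |g (x j) / ∏ i ∈ (range (r + 1)).erase j,
      (x j - x i)| ≤ r.choose j * ε := by
    intro j hj
    have hjr : j ≤ r := Nat.lt_succ_iff.1 (mem_range.1 hj)
    have hprod : d ^ r * (j ! * (r - j)!) ≤ ∏ i ∈ (range (r + 1)).erase j, |x j - x i| :=
      calc d ^ r * (j ! * (r - j)!) = ∏ i ∈ (range (r + 1)).erase j, (|(j : ℝ) - i| * d) := by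
            rw [prod_mul_distrib, prod_const, card_erase_of_mem hj, card_range, Nat.add_sub_cancel,
              prod_erase_range_abs_natCast_sub hjr, mul_comm]
        _ ≤ ∏ i ∈ (range (r + 1)).erase j, |x j - x i| :=
            prod_le_prod (fun _ _ => by positivity)
              fun i _ => abs_natCast_sub_mul_le_abs_sub hx i j
    have hfac : (r ! : ℝ) = r.choose j * (j ! * (r - j)!) := by
      rw [← mul_assoc]; exact_mod_cast (Nat.choose_mul_factorial_mul_factorial hjr).symm
    have hprod_nonneg : 0 ≤ ∏ i ∈ (range (r + 1)).erase j, |x j - x i| := by positivity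
    calc r ! * d ^ r * |g (x j) / ∏ i ∈ (range (r + 1)).erase j, (x j - x i)|
        = r.choose j * (d ^ r * (j ! * (r - j)!) * |g (x j)| /
            ∏ i ∈ (range (r + 1)).erase j, |x j - x i|) := by
          rw [abs_div, abs_prod, hfac]; ring
      _ ≤ r.choose j * ε := by
          refine mul_le_mul_of_nonneg_left (div_le_of_le_mul₀ hprod_nonneg hε ?_) (by positivity)
          rw [mul_comm ε]
          exact mul_le_mul hprod (hg j hjr) (abs_nonneg _) hprod_nonneg
  calc r ! * d ^ r * |divDiff g x r|
      ≤ ∑ j ∈ range (r + 1),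
          r ! * d ^ r * |g (x j) / ∏ i ∈ (range (r + 1)).erase j, (x j - x i)| := by
        rw [← mul_sum]
        exact mul_le_mul_of_nonneg_left (abs_sum_le_sum_abs _ _) (by positivity)
    _ ≤ ∑ j ∈ range (r + 1), (r.choose j : ℝ) * ε := sum_le_sum hterm
    _ = 2 ^ r * ε := by rw [← sum_mul, ← Nat.cast_sum, Nat.sum_range_choose, Nat.cast_pow,
          Nat.cast_ofNat]

theorem exists_lt_measure_inter_Ici {μ : Measure ℝ} {E : Set ℝ} {a : ENNReal} (h : a < μ E) :
    ∃ n : ℕ, a < μ (E ∩ Ici (-n : ℝ)) := by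
  have hmono : Monotone fun n : ℕ => E ∩ Ici (-n : ℝ) := fun m n hmn =>
    inter_subset_inter_right _ (Ici_subset_Ici.2 (by simpa using hmn))
  have hunion : ⋃ n : ℕ, E ∩ Ici (-n : ℝ) = E := by
    rw [← inter_iUnion, inter_eq_left]
    intro t _
    obtain ⟨n, hn⟩ := exists_nat_ge (-t)
    exact mem_iUnion.2 ⟨n, by simp only [Set.mem_Ici]; linarith⟩
  rwa [← hunion, hmono.measure_iUnion, lt_iSup_iff] at h

theorem exists_separated_seq_of_lt_volume {d : ℝ} (hd : 0 ≤ d) (k : ℕ) {E : Set ℝ}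
    (hE : ENNReal.ofReal (k * d) < volume E) :
    ∃ s : ℕ → ℝ, (∀ i, s i + d ≤ s (i + 1)) ∧ ∀ i ≤ k, s i ∈ E := by
  induction k generalizing E with
  | zero =>
    obtain ⟨x, hx⟩ := nonempty_of_measure_ne_zero (by simpa using hE.ne')
    exact ⟨fun i => x + i * d, fun i => by push_cast; linarith, fun i hi => by
      simpa [Nat.le_zero.1 hi] using hx⟩
  | succ k ih =>
    obtain ⟨n, hn⟩ := exists_lt_measure_inter_Ici hE
    set E' := E ∩ Ici (-n : ℝ)
    obtain ⟨w, -, hw, hwE⟩ := ENNReal.lt_iff_exists_real_btwn.1 hn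
    have hkw : (k + 1) * d < w := by
      rw [ENNReal.ofReal_lt_ofReal_iff_of_nonneg (by positivity)] at hw
      exact_mod_cast hw
    have hE'_ne : E'.Nonempty := nonempty_of_measure_ne_zero (ne_bot_of_gt hwE)
    have hE'_bdd : BddBelow E' := ⟨-n, fun t ht => ht.2⟩
    -- `x` is a point of `E'` almost at its left end, so little of `E'` lies left of `x + d`.
    obtain ⟨x, hxE', hx⟩ := exists_lt_of_csInf_lt hE'_ne
      (lt_add_of_pos_right (sInf E') (sub_pos.2 hkw))
    have hax : sInf E' ≤ x := csInf_le hE'_bdd hxE'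
    have htail : ENNReal.ofReal (k * d) < volume (E ∩ Ici (x + d)) := by
      by_contra! htail
      have hhead : volume (E' ∩ Iio (x + d)) ≤ ENNReal.ofReal (x + d - sInf E') := by
        rw [← Real.volume_Ico]
        exact measure_mono fun t ht => ⟨csInf_le hE'_bdd ht.1, ht.2⟩
      have hsub : E' \ Iio (x + d) ⊆ E ∩ Ici (x + d) := fun t ht =>
        ⟨ht.1.1, mem_Ici.2 (not_lt.1 ht.2)⟩
      have : volume E' ≤ ENNReal.ofReal (x + d - sInf E' + k * d) := by
        rw [ENNReal.ofReal_add (by linarith) (by positivity)]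
        calc volume E' ≤ volume (E' ∩ Iio (x + d)) + volume (E' \ Iio (x + d)) :=
              measure_le_inter_add_sdiff _ _ _
          _ ≤ _ := add_le_add hhead ((measure_mono hsub).trans htail)
      exact (hwE.trans_le this).not_ge (ENNReal.ofReal_le_ofReal (by linarith))
    obtain ⟨s, hs_sep, hsE⟩ := ih htail
    refine ⟨fun | 0 => x | i + 1 => s i, ?_, ?_⟩
    · rintro (_ | i)
      · exact (hsE 0 (Nat.zero_le k)).2
      · exact hs_sep i
    · rintro (_ | i) hi
      · exact hxE'.1
      · exact (hsE i (by omega)).1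

theorem mul_pow_le_of_separated {I : Set ℝ} (hI : I.OrdConnected) {r : ℕ} {f : ℝ → ℝ}
    (hf : ContDiffOn ℝ r f I) {κ : ℝ} (hder : ∀ t ∈ I, κ ≤ |iteratedDerivWithin r f I t|)
    {s : ℕ → ℝ} {d ε : ℝ} (hd : 0 < d) (hs : ∀ i, s i + d ≤ s (i + 1)) (hsI : ∀ i ≤ r, s i ∈ I)
    (hfs : ∀ i ≤ r, |f (s i)| ≤ ε) : κ * d ^ r ≤ 2 ^ r * ε := by
  have hs_mono : StrictMono s := strictMono_nat_of_lt_succ fun i => by linarith [hs i]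
  obtain ⟨ξ, hξ, hξ_eq⟩ := exists_iteratedDerivWithin_eq_factorial_mul_divDiff hI r hf hs_mono hsI
  have hξI : ξ ∈ I := hI.out (hsI 0 (Nat.zero_le r)) (hsI r le_rfl) hξ
  calc κ * d ^ r ≤ |iteratedDerivWithin r f I ξ| * d ^ r :=
        mul_le_mul_of_nonneg_right (hder ξ hξI) (by positivity)
    _ = r ! * d ^ r * |divDiff f s r| := by
        rw [hξ_eq, abs_mul, Nat.abs_cast]; ring
    _ ≤ 2 ^ r * ε := factorial_mul_pow_mul_abs_divDiff_le hd.le hs hfs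

theorem volume_sublevel_le {I : Set ℝ} (hI : I.OrdConnected) {r : ℕ} (hr : 0 < r) {f : ℝ → ℝ}
    (hf : ContDiffOn ℝ r f I) {κ : ℝ} (hκ : 0 < κ)
    (hder : ∀ t ∈ I, κ ≤ |iteratedDerivWithin r f I t|) {ε : ℝ} (hε : 0 ≤ ε) :
    volume {t ∈ I | |f t| ≤ ε} ≤ ENNReal.ofReal (2 * r * (ε / κ) ^ ((1 : ℝ) / r)) := by
  set d₀ := 2 * (ε / κ) ^ ((1 : ℝ) / r)
  have hd₀ : 0 ≤ d₀ := by positivity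
  have hr' : (0 : ℝ) < r := Nat.cast_pos.2 hr
  by_contra! hvol
  obtain ⟨w, -, hw, hwE⟩ := ENNReal.lt_iff_exists_real_btwn.1 hvol
  rw [ENNReal.ofReal_lt_ofReal_iff_of_nonneg (by positivity)] at hw
  set d := w / r
  have hd₀d : d₀ < d := by rw [lt_div_iff₀ hr']; linarith
  obtain ⟨s, hs, hsE⟩ := exists_separated_seq_of_lt_volume (hd₀.trans hd₀d.le) r
    (by rwa [mul_div_cancel₀ w hr'.ne'] : ENNReal.ofReal (r * d) < volume {t ∈ I | |f t| ≤ ε})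
  have hbound := mul_pow_le_of_separated hI hf hder (hd₀.trans_lt hd₀d) hs
    (fun i hi => (hsE i hi).1) (fun i hi => (hsE i hi).2)
  have hd₀_pow : κ * d₀ ^ r = 2 ^ r * ε := by
    rw [mul_pow, one_div, Real.rpow_inv_natCast_pow (by positivity) hr.ne']
    field_simp
  have := mul_lt_mul_of_pos_left (pow_lt_pow_left₀ hd₀d hd₀ hr.ne') hκ
  linarith

theorem two_mul_le_two_pow_mul_rpow {r : ℕ} (hr : 0 < r) :
    (2 * r : ℝ) ≤ 2 ^ (r - 1) * (2 * r !) ^ ((1 : ℝ) / r) := by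
  have hnat : (2 * r) ^ r ≤ (2 ^ (r - 1)) ^ r * (2 * r !) := by
    have hr_le : r ≤ 2 ^ (r - 1) := by have := Nat.lt_two_pow_self (n := r - 1); omega
    have hfac : 2 ^ (r - 1) ≤ r ! := by
      have := Nat.factorial_mul_pow_le_factorial (m := 1) (n := r - 1)
      rwa [Nat.factorial_one, one_mul, Nat.add_sub_cancel' hr] at this
    calc (2 * r) ^ r = r ^ r * (2 * 2 ^ (r - 1)) := by
          rw [mul_pow, ← pow_succ', Nat.sub_add_cancel hr, mul_comm]
      _ ≤ (2 ^ (r - 1)) ^ r * (2 * r !) := by gcongr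
  rw [one_div, ← Real.pow_rpow_inv_natCast (by positivity : (0 : ℝ) ≤ 2 ^ (r - 1)) hr.ne',
    ← Real.mul_rpow (by positivity) (by positivity),
    ← Real.pow_rpow_inv_natCast (by positivity : (0 : ℝ) ≤ 2 * r) hr.ne']
  gcongr
  exact_mod_cast hnat

theorem two_mul_mul_div_rpow_le {r : ℕ} (hr : 0 < r) {κ ε : ℝ} (hκ : 0 < κ) (hε : 0 ≤ ε) :
    2 * r * (ε / κ) ^ ((1 : ℝ) / r) ≤
      2 ^ (r - 1) * (2 * (r ! : ℝ) / κ) ^ ((1 : ℝ) / r) * ε ^ ((1 : ℝ) / r) := by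
  calc 2 * r * (ε / κ) ^ ((1 : ℝ) / r)
    _ ≤ 2 ^ (r - 1) * (2 * r !) ^ ((1 : ℝ) / r) * (ε / κ) ^ ((1 : ℝ) / r) :=
        mul_le_mul_of_nonneg_right (two_mul_le_two_pow_mul_rpow hr) (by positivity)
    _ = _ := by
        rw [Real.div_rpow hε hκ.le, Real.div_rpow (by positivity) hκ.le]
        ring

theorem damped_integral_bound_general
    (r : ℕ) (hr : 1 ≤ r) (I : Set ℝ) (hI : I.OrdConnected)
    (h : ℝ → ℝ) (κ : ℝ) (hκ : 0 < κ)
    (hsm : ContDiffOn ℝ r h I)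
    (hder : ∀ t ∈ I, κ ≤ |iteratedDerivWithin r h I t|)
    (ψ : ℝ → ℝ) (M : ℝ)
    (hψb : ∀ t, |ψ t| ≤ M)
    (hψs : Function.support ψ ⊆ I)
    (β : ℝ → ℝ)
    (hβs : Function.support β ⊆ Set.Icc (1 / 2) 2)
    (hβb : ∀ s, |β s| ≤ 1)
    (hbar : ℝ) (hhb : 0 < hbar) :
    (∫ t in I, |ψ t * β (hbar⁻¹ * h t)|)
      ≤ 2 ^ (r - 1) * M * (2 * (r.factorial : ℝ) / κ) ^ ((1 : ℝ) / r)
          * (2 * hbar) ^ ((1 : ℝ) / r) := by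
  set E := {t ∈ I | |h t| ≤ 2 * hbar}
  have hE := volume_sublevel_le hI hr hsm hκ hder (by positivity : 0 ≤ 2 * hbar)
  have hM₀ : 0 ≤ M := (abs_nonneg _).trans (hψb 0)
  have hmem_E : ∀ t, |ψ t * β (hbar⁻¹ * h t)| ≠ 0 → t ∈ E := by
    intro t ht
    rw [abs_ne_zero, mul_ne_zero_iff] at ht
    have hβt := hβs ht.2
    have h_le := (inv_mul_le_iff₀ hhb).1 hβt.2
    have h_ge := (le_inv_mul_iff₀ hhb).1 hβt.1
    exact ⟨hψs ht.1, abs_le.2 ⟨by linarith, by linarith⟩⟩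
  calc (∫ t in I, |ψ t * β (hbar⁻¹ * h t)|) = ∫ t in E, |ψ t * β (hbar⁻¹ * h t)| := by
        rw [setIntegral_eq_integral_of_forall_compl_eq_zero fun t ht => ?_,
          setIntegral_eq_integral_of_forall_compl_eq_zero fun t ht => not_not.1 (mt (hmem_E t) ht)]
        rw [Function.notMem_support.1 (mt (@hψs t) ht), zero_mul, abs_zero]
    _ ≤ M * volume.real E := by
        refine (Real.le_norm_self _).trans ?_
        refine norm_setIntegral_le_of_norm_le_const (hE.trans_lt ENNReal.ofReal_lt_top)
          fun t _ => ?_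
        rw [Real.norm_eq_abs, abs_abs, abs_mul]
        simpa using mul_le_mul (hψb t) (hβb _) (abs_nonneg _) hM₀
    _ ≤ M * (2 * r * (2 * hbar / κ) ^ ((1 : ℝ) / r)) :=
        mul_le_mul_of_nonneg_left (ENNReal.toReal_le_of_le_ofReal (by positivity) hE) hM₀
    _ ≤ M * (2 ^ (r - 1) * (2 * (r ! : ℝ) / κ) ^ ((1 : ℝ) / r) * (2 * hbar) ^ ((1 : ℝ) / r)) :=
        mul_le_mul_of_nonneg_left (two_mul_mul_div_rpow_le hr hκ (by positivity)) hM₀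
    _ = _ := by ring

theorem damped_integral_bound
    (r : ℕ) (hr : 1 ≤ r) (I : Set ℝ) (hI : I.OrdConnected)
    (h : ℝ → ℝ) (κ : ℝ) (hκ : 0 < κ)
    (hsm : ContDiffOn ℝ r h I)
    (hder : ∀ t ∈ I, κ ≤ |iteratedDerivWithin r h I t|)
    (ψ : ℝ → ℝ) (M : ℝ) (hM : 0 < M)
    (hψm : Measurable ψ) (hψb : ∀ t, |ψ t| ≤ M)
    (hψs : Function.support ψ ⊆ I)
    (β : ℝ → ℝ) (hβm : Measurable β)
    (hβs : Function.support β ⊆ Set.Icc (1 / 2) 2)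
    (hβb : ∀ s, |β s| ≤ 1)
    (hbar : ℝ) (hhb : 0 < hbar) :
    (∫ t in I, |ψ t * β (hbar⁻¹ * h t)|)
      ≤ 2 ^ (r - 1) * M * (2 * (r.factorial : ℝ) / κ) ^ ((1 : ℝ) / r)
          * (2 * hbar) ^ ((1 : ℝ) / r) :=
  damped_integral_bound_general r hr I hI h κ hκ hsm hder ψ M hψb hψs β hβs hβb hbar hhb
end
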